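/- arXiv:2204.05612 — 7 statements merged into one kernel-verified Lean document; each statement's English description precedes it below -/
import Mathlib

section
/- For all j ∈ ℕ₀ and ℓ ∈ ℕ, the identity ∑_{k=0}^{2j+1} (-1)^k C(2j+1, k) (2/ℓ)^k · S(k+ℓ, ℓ) / C(k+ℓ, ℓ) = 0 holds, where S denotes the Stirling numbers of the second kind. -/
open scoped Classical BigOperators Nat

/-- Weighted Stirling numbers of the second kind (Carlitz). -/
noncomputable def weightedR (n k : ℕ) (r : ℝ) : ℝ :=
  (1 / (k ! : ℝ)) * ∑ j ∈ Finset.range (k + 1),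
    (-1 : ℝ) ^ (k - j) * (k.choose j) * (r + j) ^ n

/-- Central factorial numbers of the second kind. -/
noncomputable def centralT (n ℓ : ℕ) : ℝ :=
  (1 / (ℓ ! : ℝ)) * ∑ j ∈ Finset.range (ℓ + 1),
    (-1 : ℝ) ^ j * (ℓ.choose j) * ((ℓ : ℝ) / 2 - j) ^ n

/-- Stirling numbers of the second kind. -/
def stirlingS : ℕ → ℕ → ℕ
  | 0, 0 => 1
  | 0, _ + 1 => 0
  | _ + 1, 0 => 0
  | n + 1, k + 1 => (k + 1) * stirlingS n (k + 1) + stirlingS n k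

/-- The sinc function. -/
noncomputable def sinc (z : ℂ) : ℂ := if z = 0 then 1 else Complex.sin z / z

/-- The hyperbolic sinc function. -/
noncomputable def sinhc (z : ℂ) : ℂ := if z = 0 then 1 else Complex.sinh z / z

/-- Partial Bell polynomials. -/
noncomputable def bellB (n k : ℕ) (x : ℕ → ℝ) : ℝ :=
  ∑ ℓ ∈ Finset.univ.filter (fun ℓ : Fin n → Fin (n + 1) =>
      (∑ i, (i.1 + 1) * (ℓ i).1) = n ∧ (∑ i, (ℓ i).1) = k),
    ((n ! : ℝ) / ∏ i, ((ℓ i).1)!) * ∏ i, (x (i.1 + 1) / (i.1 + 1)!) ^ (ℓ i).1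

/-- Rising factorial of a real number. -/
noncomputable def risingF (x : ℝ) (k : ℕ) : ℝ := ∏ i ∈ Finset.range k, (x + i)

/-- Number of set partitions of an `n`-element set into `ℓ` odd-sized blocks. -/
noncomputable def oddPartCount (n ℓ : ℕ) : ℕ :=
  ((Finset.univ : Finset (Finset (Finset (Fin n)))).filter
    (fun P : Finset (Finset (Fin n)) => P.card = ℓ ∧ (∀ b ∈ P, Odd b.card) ∧
      ((P : Set (Finset (Fin n))).PairwiseDisjoint id) ∧
      P.sup id = Finset.univ)).card

/-!
Write `Δ` for the forward difference with step `1`. Then `Δ^ℓ (x ↦ x ^ m) 0 = ℓ! S(m, ℓ)`, so the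
binomial expansion of `(x - ℓ/2) ^ (n + ℓ)` gives
`Δ^ℓ (x ↦ x ^ (n + ℓ)) (-ℓ/2) = ℓ! ∑ₖ C(n+ℓ, k+ℓ) (-ℓ/2)^(n-k) S(k+ℓ, ℓ)`, and by
`C(n, k) / C(k+ℓ, ℓ) = C(n+ℓ, k+ℓ) / C(n+ℓ, ℓ)` the sum in question is a multiple of this value.
The stencil `-ℓ/2, …, ℓ/2` of `Δ^ℓ` at `-ℓ/2` is symmetric about `0`, so the reflection `x ↦ -x`
multiplies this value both by `(-1)^(n+ℓ)` and by `(-1)^ℓ`; for odd `n` it therefore vanishes.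
This is the finite-difference form of the parity of `e^(-ℓx/2) (e^x - 1)^ℓ = (2 sinh (x/2))^ℓ`.
-/

open Finset fwdDiff

theorem stirlingS_eq_stirlingSecond : ∀ n k : ℕ, stirlingS n k = Nat.stirlingSecond n k
  | 0, 0 | 0, _ + 1 | _ + 1, 0 => rfl
  | n + 1, k + 1 => by
    rw [stirlingS, Nat.stirlingSecond_succ_succ, stirlingS_eq_stirlingSecond n (k + 1),
      stirlingS_eq_stirlingSecond n k]

theorem fwdDiff_iter_comp_neg {M G : Type*} [AddCommGroup M] [AddCommGroup G] (h : M)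
    (f : M → G) (n : ℕ) (y : M) :
    Δ_[h] ^[n] (fun x ↦ f (-x)) y = (-1 : ℤ) ^ n • Δ_[h] ^[n] f (-(y + n • h)) := by
  rw [fwdDiff_iter_eq_sum_shift, fwdDiff_iter_eq_sum_shift, ← sum_range_reflect, smul_sum]
  refine sum_congr rfl fun k hk ↦ ?_
  obtain ⟨m, rfl⟩ := Nat.exists_eq_add_of_le (Nat.lt_succ_iff.mp (mem_range.mp hk))
  rw [add_tsub_cancel_right, add_tsub_cancel_left, add_tsub_cancel_right, Nat.choose_symm_add,
    smul_smul, ← mul_assoc, ← pow_add, add_assoc, pow_add _ k, Even.neg_one_pow ⟨m, rfl⟩,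
    mul_one, add_nsmul]
  congr 2
  abel

section CommRing

variable {R : Type*} [CommRing R]

theorem fwdDiff_iter_succ_mul_apply_zero (g : R → R) (m : ℕ) :
    Δ_[1] ^[m + 1] (fun x ↦ x * g x) 0 = (m + 1) * Δ_[1] ^[m] g 1 := by
  simp only [fwdDiff_iter_eq_sum_shift, zsmul_eq_mul, nsmul_eq_mul, mul_one, zero_add]
  rw [sum_range_succ', Nat.cast_zero, zero_mul, mul_zero, add_zero, mul_sum]
  refine sum_congr rfl fun k _ ↦ ?_
  have hchoose : ((m + 1).choose (k + 1) : R) * (k + 1) = (m + 1) * (m.choose k : R) := by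
    simpa using congrArg (Nat.cast : ℕ → R) (Nat.add_one_mul_choose_eq m k).symm
  rw [Nat.add_sub_add_right, add_comm 1 (k : R)]
  push_cast
  linear_combination (-1 : R) ^ (m - k) * g (k + 1) * hchoose

theorem fwdDiff_iter_pow_apply_zero (n ℓ : ℕ) :
    Δ_[1] ^[ℓ] (fun x : R ↦ x ^ n) 0 = ℓ ! * Nat.stirlingSecond n ℓ := by
  induction n generalizing ℓ with
  | zero =>
    cases ℓ with
    | zero => simp
    | succ ℓ => rw [fwdDiff_iter_pow_eq_zero_of_lt ℓ.succ_pos]; simp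
  | succ n ih =>
    cases ℓ with
    | zero => simp
    | succ ℓ =>
      have hshift : Δ_[1] ^[ℓ] (fun x : R ↦ x ^ n) 1 =
          Δ_[1] ^[ℓ] (fun x : R ↦ x ^ n) 0 + Δ_[1] ^[ℓ + 1] (fun x : R ↦ x ^ n) 0 := by
        rw [Function.iterate_succ_apply', fwdDiff, zero_add, add_sub_cancel]
      simp_rw [pow_succ', fwdDiff_iter_succ_mul_apply_zero, hshift, ih,
        Nat.stirlingSecond_succ_succ, Nat.factorial_succ]
      push_cast
      ring

theorem fwdDiff_iter_pow_apply (ℓ N : ℕ) (y : R) :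
    Δ_[1] ^[ℓ] (fun x ↦ x ^ N) y =
      ∑ m ∈ range (N + 1), N.choose m * y ^ (N - m) * Δ_[1] ^[ℓ] (fun x ↦ x ^ m) 0 := by
  have hexpand : (fun x : R ↦ (x + y) ^ N) =
      ∑ m ∈ range (N + 1), (N.choose m * y ^ (N - m)) • fun x : R ↦ x ^ m := by
    ext x
    simp only [add_pow, Finset.sum_apply, Pi.smul_apply, smul_eq_mul]
    exact sum_congr rfl fun m _ ↦ by ring
  have hshift := fwdDiff_iter_comp_add (1 : R) (fun x ↦ x ^ N) y ℓ 0
  rw [zero_add] at hshift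
  rw [← hshift, hexpand, fwdDiff_iter_finsetSum, Finset.sum_apply]
  simp only [fwdDiff_iter_const_smul, Pi.smul_apply, smul_eq_mul]

end CommRing

section Field

variable {K : Type*} [Field K] [CharZero K]

theorem fwdDiff_iter_pow_apply_neg_half_eq_zero {ℓ N : ℕ} (hodd : Odd (N + ℓ)) :
    Δ_[1] ^[ℓ] (fun x : K ↦ x ^ N) (-(ℓ / 2)) = 0 := by
  have hreflect := fwdDiff_iter_comp_neg (1 : K) (fun x ↦ x ^ N) ℓ (-(ℓ / 2))
  have hcenter : -(-((ℓ : K) / 2) + ℓ • 1) = -(ℓ / 2) := by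
    rw [nsmul_one]
    ring
  have hpar : (fun x : K ↦ (-x) ^ N) = (-1 : K) ^ N • fun x ↦ x ^ N := by
    ext x
    simp [neg_pow x N]
  have hsign : (-1 : K) ^ N = -(-1) ^ ℓ := by
    have hsq : ((-1 : K) ^ ℓ) ^ 2 = 1 := by rw [← pow_mul, pow_mul']; simp
    have hprod : (-1 : K) ^ N * (-1) ^ ℓ = -1 := by rw [← pow_add, hodd.neg_one_pow]
    linear_combination (-(-1 : K) ^ N) * hsq + (-1 : K) ^ ℓ * hprod
  rw [hcenter, hpar, fwdDiff_iter_const_smul, Pi.smul_apply, hsign, zsmul_eq_mul,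
    smul_eq_mul] at hreflect
  push_cast at hreflect
  have hzero : (2 * (-1 : K) ^ ℓ) * Δ_[1] ^[ℓ] (fun x : K ↦ x ^ N) (-(ℓ / 2)) = 0 := by
    linear_combination -hreflect
  simpa using hzero

theorem sum_choose_mul_pow_mul_stirlingSecond_eq_zero {n : ℕ} (hn : Odd n) (ℓ : ℕ) :
    ∑ k ∈ range (n + 1),
      ((n + ℓ).choose (k + ℓ) : K) * (-(ℓ / 2)) ^ (n - k) * Nat.stirlingSecond (k + ℓ) ℓ = 0 := by
  have hvanish := fwdDiff_iter_pow_apply_neg_half_eq_zero (K := K) (N := n + ℓ) (ℓ := ℓ)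
    (by rw [add_assoc, ← two_mul]; exact hn.add_even (even_two_mul ℓ))
  rw [fwdDiff_iter_pow_apply] at hvanish
  simp only [fwdDiff_iter_pow_apply_zero] at hvanish
  rw [add_comm n ℓ, add_assoc, sum_range_add, sum_eq_zero, zero_add] at hvanish
  · rw [← mul_right_inj' (Nat.cast_ne_zero.mpr ℓ.factorial_ne_zero), mul_zero, mul_sum,
      ← hvanish]
    refine sum_congr rfl fun k _ ↦ ?_
    rw [Nat.add_sub_add_left, add_comm ℓ n, add_comm ℓ k]
    ring
  · intro m hm
    rw [Nat.stirlingSecond_eq_zero_of_lt (mem_range.mp hm)]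
    simp

theorem cast_choose_div_choose_add (n k ℓ : ℕ) :
    (n.choose k : K) / (k + ℓ).choose ℓ = (n + ℓ).choose (k + ℓ) / (n + ℓ).choose ℓ := by
  have h := Nat.choose_mul (n := n + ℓ) (Nat.le_add_left ℓ k)
  rw [Nat.add_sub_cancel, Nat.add_sub_cancel] at h
  rw [div_eq_div_iff (Nat.cast_ne_zero.mpr (Nat.choose_pos (Nat.le_add_left ℓ k)).ne')
    (Nat.cast_ne_zero.mpr (Nat.choose_pos (Nat.le_add_left ℓ n)).ne')]
  exact_mod_cast (h.trans (mul_comm _ _)).symm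

theorem neg_one_pow_mul_choose_mul_pow_div_choose {n k : ℕ} (hk : k ≤ n) (ℓ : ℕ) {x : K}
    (hx : x ≠ 0) (s : K) :
    (-1) ^ k * n.choose k * x ^ k * s / (k + ℓ).choose ℓ =
      (-x) ^ n / (n + ℓ).choose ℓ * ((n + ℓ).choose (k + ℓ) * (-x⁻¹) ^ (n - k) * s) := by
  obtain ⟨m, rfl⟩ := Nat.exists_eq_add_of_le hk
  calc (-1) ^ k * (k + m).choose k * x ^ k * s / (k + ℓ).choose ℓ
      = (-x) ^ k * (((k + m).choose k : K) / (k + ℓ).choose ℓ) * s := by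
        rw [neg_pow x]
        ring
    _ = (-x) ^ k * (-x * -x⁻¹) ^ m *
          (((k + m + ℓ).choose (k + ℓ) : K) / (k + m + ℓ).choose ℓ) * s := by
        rw [cast_choose_div_choose_add, neg_mul_neg, mul_inv_cancel₀ hx, one_pow, mul_one]
    _ = _ := by
        rw [Nat.add_sub_cancel_left, mul_pow, pow_add]
        ring

end Field

theorem stmt5 (j ℓ : ℕ) (hℓ : 1 ≤ ℓ) :
    ∑ k ∈ Finset.range (2 * j + 2),
      (-1 : ℝ) ^ k * ((2 * j + 1).choose k) * (2 / (ℓ : ℝ)) ^ k *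
        (stirlingS (k + ℓ) ℓ) / ((k + ℓ).choose ℓ) = 0 := by
  have hx : 2 / (ℓ : ℝ) ≠ 0 := div_ne_zero two_ne_zero (Nat.cast_ne_zero.mpr (by omega))
  rw [sum_congr rfl fun k hk ↦ neg_one_pow_mul_choose_mul_pow_div_choose
    (Nat.lt_succ_iff.mp (mem_range.mp hk)) ℓ hx _, ← mul_sum]
  simp_rw [inv_div, stirlingS_eq_stirlingSecond]
  rw [sum_choose_mul_pow_mul_stirlingSecond_eq_zero ⟨j, rfl⟩ ℓ, mul_zero]
end

section
/- For every integer k ≥ 2 and every ℓ with 1 ≤ ℓ ≤ k - 1, the alternating sum ∑_{j=1}^{k} (-1)^j C(k, j) T(2ℓ + j, j) / C(2ℓ + j, j) = 0 holds. -/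
open scoped Classical BigOperators Nat

/-!
With `G(x) = sinh (x/2) / (x/2)`, `(x G)^j = (e^{x/2} - e^{-x/2})^j` has `x^n`-coefficient
`j! T(n, j) / n!`, so `T(2ℓ + j, j) / C(2ℓ + j, j) = (2ℓ)! [x^{2ℓ}] G^j` and the sum is
`(2ℓ)! [x^{2ℓ}] ((1 - G)^k - 1)`. Since `G = 1 + O(x^2)`, `(1 - G)^k = O(x^{2k})`, and `2ℓ < 2k`.
-/

open PowerSeries Finset

lemma PowerSeries.rescale_exp_pow {A : Type*} [CommRing A] [Algebra ℚ A] (a : A) (m : ℕ) :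
    rescale a (exp A) ^ m = rescale (m * a) (exp A) := by
  rw [← map_pow, exp_pow_eq_rescale_exp, rescale_rescale]

noncomputable def sinhcHalfSeries : ℝ⟦X⟧ :=
  mk fun n => if Even n then (((n + 1)! : ℝ) * 2 ^ n)⁻¹ else 0

lemma X_mul_sinhcHalfSeries :
    X * sinhcHalfSeries = rescale (1 / 2 : ℝ) (exp ℝ) - rescale (-(1 / 2) : ℝ) (exp ℝ) := by
  ext n
  cases n with
  | zero => rw [coeff_zero_X_mul, map_sub, coeff_rescale, coeff_rescale]; simp
  | succ m =>
    rw [coeff_succ_X_mul, map_sub, coeff_rescale, coeff_rescale, coeff_exp]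
    simp only [sinhcHalfSeries, coeff_mk, one_div, map_inv₀, map_natCast]
    rcases Nat.even_or_odd m with hm | hm
    · rw [if_pos hm, hm.add_one.neg_pow, Nat.factorial_succ]
      field_simp
      rw [pow_succ, ← mul_assoc, ← mul_pow]
      norm_num
    · rw [if_neg (Nat.not_even_iff_odd.mpr hm), hm.add_one.neg_pow, sub_self]

lemma coeff_exp_half_sub_pow (j n : ℕ) :
    coeff n ((rescale (1 / 2 : ℝ) (exp ℝ) - rescale (-(1 / 2) : ℝ) (exp ℝ)) ^ j)
      = j ! * centralT n j / n ! := by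
  rw [sub_eq_neg_add, add_pow, map_sum, centralT, mul_sum, mul_sum, sum_div]
  refine sum_congr rfl fun i hi => ?_
  have hij : i ≤ j := Nat.lt_succ_iff.mp (mem_range.mp hi)
  have hprod : (-rescale (-(1 / 2) : ℝ) (exp ℝ)) ^ i * rescale (1 / 2 : ℝ) (exp ℝ) ^ (j - i)
      = C ((-1 : ℝ) ^ i) * rescale ((j : ℝ) / 2 - i) (exp ℝ) := by
    rw [neg_pow, rescale_exp_pow, rescale_exp_pow, mul_assoc, exp_mul_exp_eq_exp_add,
      Nat.cast_sub hij, map_pow, map_neg, map_one]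
    ring_nf
  rw [hprod, ← map_natCast (C (R := ℝ)), mul_right_comm, ← map_mul, coeff_C_mul, coeff_rescale,
    coeff_exp]
  have hj : (j ! : ℝ) ≠ 0 := by positivity
  simp only [one_div, map_inv₀, map_natCast]
  field_simp

lemma centralT_div_choose_eq_coeff (n j : ℕ) :
    centralT (n + j) j / (n + j).choose j = n ! * coeff n (sinhcHalfSeries ^ j) := by
  have hcoeff : coeff n (sinhcHalfSeries ^ j) = j ! * centralT (n + j) j / (n + j)! := by
    rw [← coeff_exp_half_sub_pow, ← X_mul_sinhcHalfSeries, mul_pow, coeff_X_pow_mul]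
  have hfact : ((n + j).choose j : ℝ) * n ! * j ! = (n + j)! := by
    exact_mod_cast Nat.add_choose_mul_factorial_mul_factorial n j
  have hchoose : ((n + j).choose j : ℝ) ≠ 0 :=
    Nat.cast_ne_zero.mpr (Nat.choose_pos (Nat.le_add_left j n)).ne'
  rw [hcoeff, ← hfact]
  field_simp

lemma X_sq_dvd_one_sub_sinhcHalfSeries : (X : ℝ⟦X⟧) ^ 2 ∣ 1 - sinhcHalfSeries := by
  rw [X_pow_dvd_iff]
  intro m hm
  interval_cases m <;> simp [sinhcHalfSeries, coeff_one]

lemma PowerSeries.coeff_one_sub_pow {R : Type*} [CommRing R] (f : R⟦X⟧) (k n : ℕ) :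
    coeff n ((1 - f) ^ k) = ∑ j ∈ range (k + 1), (-1) ^ j * k.choose j * coeff n (f ^ j) := by
  rw [sub_eq_neg_add, add_pow, map_sum]
  refine sum_congr rfl fun j _ => ?_
  rw [one_pow, mul_one, neg_pow, mul_right_comm, ← map_natCast (C (R := R)), ← map_one C,
    ← map_neg C, ← map_pow C, ← map_mul, coeff_C_mul]

theorem stmt7_general (k ℓ : ℕ) (h1 : 1 ≤ ℓ) (h2 : ℓ ≤ k - 1) :
    ∑ j ∈ Finset.Icc 1 k,
      (-1 : ℝ) ^ j * (k.choose j) * centralT (2 * ℓ + j) j / ((2 * ℓ + j).choose j) = 0 := by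
  have hvanish : coeff (2 * ℓ) ((1 - sinhcHalfSeries) ^ k) = 0 := by
    obtain ⟨q, hq⟩ := pow_dvd_pow_of_dvd X_sq_dvd_one_sub_sinhcHalfSeries k
    rw [hq, ← pow_mul, coeff_X_pow_mul', if_neg (by omega)]
  have hrange : range (k + 1) = insert 0 (Icc 1 k) := by
    ext j; simp only [mem_range, Order.lt_add_one_iff, mem_insert, mem_Icc]; omega
  rw [coeff_one_sub_pow, hrange, sum_insert (by simp), pow_zero, pow_zero, coeff_one,
    if_neg (by omega), mul_zero, zero_add] at hvanish
  simp_rw [mul_div_assoc, centralT_div_choose_eq_coeff]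
  rw [← mul_zero ((2 * ℓ)! : ℝ), ← hvanish, mul_sum]
  exact sum_congr rfl fun j _ => by ring

theorem stmt7 (k ℓ : ℕ) (hk : 2 ≤ k) (h1 : 1 ≤ ℓ) (h2 : ℓ ≤ k - 1) :
    ∑ j ∈ Finset.Icc 1 k,
      (-1 : ℝ) ^ j * (k.choose j) * centralT (2 * ℓ + j) j / ((2 * ℓ + j).choose j) = 0 :=
  stmt7_general k ℓ h1 h2
end

section
/- For n ≥ ℓ ≥ 0, the scaled central factorial number 𝒯(n, ℓ) = 2^{n-ℓ} T(n, ℓ) is a nonnegative integer equal to the number of set partitions of an n-element set into ℓ blocks all of odd size. -/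
open scoped Classical BigOperators Nat

/-! Expanding `(ℓ - 2|S|)^n = (∑ᵢ εₛ(i))^n`, with `εₛ = -1` on `S` and `1` off it, as a sum over maps
`f : [n] → [ℓ]` turns `ℓ! 2^n T(n, ℓ) = ∑_{S ⊆ [ℓ]} (-1)^|S| (ℓ - 2|S|)^n` into
`∑_f ∏ᵢ (1 - (-1)^|f⁻¹(i)|)`, which is `2^ℓ` times the number of maps all of whose fibres have odd
size. Such maps are the labellings of the partitions of `[n]` into `ℓ` odd blocks, and each
partition has exactly `ℓ!` labellings. -/

open Finset Function

lemma nonempty_of_pred_card {α : Type*} {p : ℕ → Prop} (hp : ¬ p 0) {s : Finset α}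
    (hs : p #s) : s.Nonempty :=
  nonempty_iff_ne_empty.2 fun h => hp (by simpa [h] using hs)

variable {α ι : Type*} [Fintype α]

noncomputable def fiber (f : α → ι) (i : ι) : Finset α := {x | f x = i}

@[simp] lemma mem_fiber {f : α → ι} {i : ι} {x : α} : x ∈ fiber f i ↔ f x = i := by
  simp [fiber]

lemma fiber_injective {f : α → ι} (hf : ∀ i, (fiber f i).Nonempty) : Injective (fiber f) := by
  intro i j hij
  obtain ⟨x, hx⟩ := hf i
  exact (mem_fiber.1 hx).symm.trans (mem_fiber.1 (hij ▸ hx : x ∈ fiber f j))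

section AlternatingSum

variable [Fintype ι] {R : Type*} [CommRing R]

lemma card_sub_two_mul_card_eq_sum (S : Finset ι) :
    (Fintype.card ι : R) - 2 * #S = ∑ i, if i ∈ S then -1 else 1 := by
  rw [← sum_compl_add_sum S, sum_ite_of_false (by simp), sum_ite_of_true (by simp)]
  simp only [sum_const, card_compl, nsmul_eq_mul, mul_one, mul_neg,
    Nat.cast_sub (card_le_univ S)]
  ring

lemma card_sub_two_mul_card_pow_eq_sum (S : Finset ι) :
    ((Fintype.card ι : R) - 2 * #S) ^ Fintype.card α
      = ∑ f : α → ι, ∏ t, if f t ∈ S then (-1 : R) else 1 := by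
  rw [card_sub_two_mul_card_eq_sum,
    ← Fintype.prod_sum (fun (_ : α) (i : ι) => if i ∈ S then (-1 : R) else 1)]
  simp

lemma neg_one_pow_card_mul_prod_sign (f : α → ι) (S : Finset ι) :
    (-1 : R) ^ #S * ∏ t, (if f t ∈ S then -1 else 1) = ∏ i ∈ S, -(-1) ^ #(fiber f i) := by
  have hfib : ∏ t, (if f t ∈ S then (-1 : R) else 1) = ∏ i ∈ S, (-1) ^ #(fiber f i) :=
    calc ∏ t, (if f t ∈ S then (-1 : R) else 1)
        = ∏ i, ∏ t ∈ fiber f i, (if i ∈ S then (-1 : R) else 1) :=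
          (prod_fiberwise univ f _).symm.trans
            (prod_congr rfl fun i _ => prod_congr rfl fun t ht => by rw [mem_fiber.1 ht])
      _ = ∏ i ∈ S, (-1) ^ #(fiber f i) := by simp
  rw [hfib, ← prod_const, ← prod_mul_distrib]
  simp_rw [neg_one_mul]

lemma prod_one_sub_neg_one_pow (c : ι → ℕ) :
    ∏ i, (1 - (-1 : R) ^ c i) = if ∀ i, Odd (c i) then 2 ^ Fintype.card ι else 0 := by
  have hodd : ∀ i, 1 - (-1 : R) ^ c i = if Odd (c i) then 2 else 0 := by
    intro i
    rcases Nat.even_or_odd (c i) with h | h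
    · simp [h.neg_one_pow, Nat.not_odd_iff_even.2 h]
    · norm_num [h.neg_one_pow, h]
  simp_rw [hodd, Fintype.prod_ite_zero, prod_const, card_univ]

theorem sum_neg_one_pow_card_mul_card_sub_two_mul_card_pow :
    ∑ S : Finset ι, (-1 : R) ^ #S * (Fintype.card ι - 2 * #S) ^ Fintype.card α
      = 2 ^ Fintype.card ι * #{f : α → ι | ∀ i, Odd #(fiber f i)} := by
  calc _ = ∑ f : α → ι, ∑ S : Finset ι, (-1 : R) ^ #S * ∏ t, (if f t ∈ S then -1 else 1) := by
          simp_rw [card_sub_two_mul_card_pow_eq_sum, mul_sum]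
          exact sum_comm
    _ = ∑ f : α → ι, ∏ i, (1 - (-1 : R) ^ #(fiber f i)) := by
          refine sum_congr rfl fun f _ => ?_
          simp_rw [neg_one_pow_card_mul_prod_sign, sub_eq_add_neg, prod_one_add, powerset_univ]
    _ = _ := by
          simp_rw [prod_one_sub_neg_one_pow, ← sum_filter, sum_const, nsmul_eq_mul, mul_comm]

end AlternatingSum

lemma factorial_mul_two_pow_mul_centralT (n ℓ : ℕ) :
    (ℓ ! : ℝ) * 2 ^ n * centralT n ℓ
      = ∑ S : Finset (Fin ℓ), (-1 : ℝ) ^ #S * (ℓ - 2 * #S) ^ n := by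
  rw [← powerset_univ, sum_powerset_apply_card (fun m => (-1 : ℝ) ^ m * ((ℓ : ℝ) - 2 * m) ^ n),
    card_univ, Fintype.card_fin, centralT, ← mul_assoc, mul_right_comm _ _ (1 / _),
    mul_one_div_cancel (by positivity), one_mul, mul_sum]
  refine sum_congr rfl fun j _ => ?_
  rw [nsmul_eq_mul, show (ℓ : ℝ) - 2 * j = 2 * (ℓ / 2 - j) by ring, mul_pow]
  ring

section BlockOf

variable {P : Finset (Finset α)}

lemma exists_mem_of_sup_eq_univ (hcover : P.sup id = univ) (x : α) : ∃ b ∈ P, x ∈ b :=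
  mem_sup.1 (hcover ▸ mem_univ x)

noncomputable def blockOf (hcover : P.sup id = univ) (x : α) : P :=
  ⟨_, (exists_mem_of_sup_eq_univ hcover x).choose_spec.1⟩

lemma mem_blockOf (hcover : P.sup id = univ) (x : α) : x ∈ (blockOf hcover x : Finset α) :=
  (exists_mem_of_sup_eq_univ hcover x).choose_spec.2

lemma blockOf_eq_iff (hdisj : (P : Set (Finset α)).PairwiseDisjoint id)
    (hcover : P.sup id = univ) {x : α} {b : P} : blockOf hcover x = b ↔ x ∈ (b : Finset α) := by
  refine ⟨fun h => h ▸ mem_blockOf hcover x, fun hx => Subtype.ext ?_⟩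
  by_contra hne
  exact disjoint_left.1 (hdisj (blockOf hcover x).2 b.2 hne) (mem_blockOf hcover x) hx

lemma fiber_symm_blockOf (hdisj : (P : Set (Finset α)).PairwiseDisjoint id)
    (hcover : P.sup id = univ) (σ : ι ≃ P) (i : ι) :
    fiber (fun x => σ.symm (blockOf hcover x)) i = σ i := by
  ext x
  rw [mem_fiber, Equiv.symm_apply_eq, blockOf_eq_iff hdisj]

end BlockOf

section Partitions

variable [Fintype ι]

noncomputable def blocks (f : α → ι) : Finset (Finset α) := univ.image (fiber f)

noncomputable def partitionsWith (p : ℕ → Prop) [DecidablePred p] (k : ℕ) :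
    Finset (Finset (Finset α)) :=
  {P | #P = k ∧ (∀ b ∈ P, p #b) ∧ (P : Set (Finset α)).PairwiseDisjoint id ∧ P.sup id = univ}

lemma pairwiseDisjoint_blocks (f : α → ι) : (blocks f : Set (Finset α)).PairwiseDisjoint id := by
  simp only [blocks, coe_image, coe_univ, Set.image_univ]
  rintro _ ⟨i, rfl⟩ _ ⟨j, rfl⟩ hij
  exact disjoint_left.2 fun x hxi hxj => hij (by rw [← mem_fiber.1 hxi, ← mem_fiber.1 hxj])

lemma sup_blocks (f : α → ι) : (blocks f).sup id = univ :=
  eq_univ_of_forall fun x => mem_sup.2 ⟨fiber f (f x), mem_image_of_mem _ (mem_univ _), by simp⟩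

lemma blocks_mem_partitionsWith {p : ℕ → Prop} [DecidablePred p] (hp : ¬ p 0) {f : α → ι}
    (hf : ∀ i, p #(fiber f i)) : blocks f ∈ partitionsWith p (Fintype.card ι) := by
  have hne : ∀ i, (fiber f i).Nonempty := fun i => nonempty_of_pred_card hp (hf i)
  refine mem_filter.2 ⟨mem_univ _, ?_, ?_, pairwiseDisjoint_blocks f, sup_blocks f⟩
  · rw [blocks, card_image_of_injective _ (fiber_injective hne), card_univ]
  · simpa [blocks] using hf

variable {P : Finset (Finset α)}

lemma blocks_symm_blockOf (hdisj : (P : Set (Finset α)).PairwiseDisjoint id)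
    (hcover : P.sup id = univ) (σ : ι ≃ P) :
    blocks (fun x => σ.symm (blockOf hcover x)) = P := by
  ext b
  simp only [blocks, mem_image, mem_univ, true_and, fiber_symm_blockOf hdisj]
  exact ⟨fun ⟨i, hi⟩ => hi ▸ (σ i).2, fun hb => ⟨σ.symm ⟨b, hb⟩, by simp⟩⟩

noncomputable def fiberEquiv (hne : ∀ b ∈ P, b.Nonempty) (f : α → ι) (hf : blocks f = P) :
    ι ≃ P :=
  Equiv.ofBijective (fun i => ⟨fiber f i, hf ▸ mem_image_of_mem _ (mem_univ i)⟩)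
    ⟨fun i j hij => fiber_injective (fun k => hne _ (hf ▸ mem_image_of_mem _ (mem_univ k)))
        (congrArg Subtype.val hij),
      fun b => by
        obtain ⟨i, -, hi⟩ := mem_image.1 (hf ▸ b.2 : (b : Finset α) ∈ blocks f)
        exact ⟨i, Subtype.ext hi⟩⟩

noncomputable def labellingEquiv (hdisj : (P : Set (Finset α)).PairwiseDisjoint id)
    (hcover : P.sup id = univ) (hne : ∀ b ∈ P, b.Nonempty) :
    {f : α → ι // blocks f = P} ≃ (ι ≃ P) where
  toFun f := fiberEquiv hne f.1 f.2
  invFun σ := ⟨fun x => σ.symm (blockOf hcover x), blocks_symm_blockOf hdisj hcover σ⟩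
  left_inv f := Subtype.ext <| funext fun x => by
    rw [Equiv.symm_apply_eq, blockOf_eq_iff hdisj]
    show x ∈ fiber f.1 (f.1 x)
    simp
  right_inv σ := Equiv.ext fun i => Subtype.ext (fiber_symm_blockOf hdisj hcover σ i)

lemma card_filter_blocks_eq (hdisj : (P : Set (Finset α)).PairwiseDisjoint id)
    (hcover : P.sup id = univ) (hne : ∀ b ∈ P, b.Nonempty) (hcard : #P = Fintype.card ι) :
    #{f : α → ι | blocks f = P} = (Fintype.card ι)! := by
  rw [← Fintype.card_subtype, Fintype.card_congr (labellingEquiv hdisj hcover hne),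
    Fintype.card_equiv (Fintype.equivOfCardEq (by simp [hcard]))]

theorem card_filter_forall_fiber {p : ℕ → Prop} [DecidablePred p] (hp : ¬ p 0) :
    #{f : α → ι | ∀ i, p #(fiber f i)}
      = (Fintype.card ι)! * #(partitionsWith (α := α) p (Fintype.card ι)) := by
  rw [card_eq_sum_card_fiberwise fun f hf => blocks_mem_partitionsWith hp (mem_filter.1 hf).2,
    mul_comm, ← smul_eq_mul, ← sum_const]
  refine sum_congr rfl fun P hP => ?_
  obtain ⟨hcard, hpb, hdisj, hcover⟩ := (mem_filter.1 hP).2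
  have hne : ∀ b ∈ P, b.Nonempty := fun b hb => nonempty_of_pred_card hp (hpb b hb)
  rw [filter_filter, ← card_filter_blocks_eq hdisj hcover hne hcard]
  congr 1
  refine filter_congr fun f _ => and_iff_right_of_imp fun hf i => ?_
  exact hpb _ (hf ▸ mem_image_of_mem _ (mem_univ i))

end Partitions

lemma oddPartCount_eq_card_partitionsWith (n ℓ : ℕ) :
    oddPartCount n ℓ = #(partitionsWith (α := Fin n) Odd ℓ) := by
  unfold oddPartCount partitionsWith
  -- the two filters differ only in decidability instances (`Fin n` has its own `DecidableEq`)
  congr!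

theorem stmt9 (n ℓ : ℕ) (h : ℓ ≤ n) :
    (2 : ℝ) ^ (n - ℓ) * centralT n ℓ = (oddPartCount n ℓ : ℝ) := by
  have hsum := sum_neg_one_pow_card_mul_card_sub_two_mul_card_pow (α := Fin n) (ι := Fin ℓ) (R := ℝ)
  rw [card_filter_forall_fiber Nat.not_odd_zero] at hsum
  simp only [Fintype.card_fin, ← oddPartCount_eq_card_partitionsWith] at hsum
  have hpow : (2 : ℝ) ^ n = 2 ^ ℓ * 2 ^ (n - ℓ) := by rw [← pow_add, Nat.add_sub_cancel' h]
  have key : (ℓ ! * 2 ^ ℓ : ℝ) * (2 ^ (n - ℓ) * centralT n ℓ) = ℓ ! * 2 ^ ℓ * oddPartCount n ℓ :=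
    calc _ = (ℓ ! : ℝ) * 2 ^ n * centralT n ℓ := by rw [hpow]; ring
      _ = _ := by rw [factorial_mul_two_pow_mul_centralT, hsum]; push_cast; ring
  exact mul_left_cancel₀ (by positivity) key
end

section
/- For all k ≥ 2 and 1 ≤ ℓ < k, the identity ∑_{j=1}^{k} (-1)^{k-j} C(2ℓ+k, 2ℓ+j) 𝒯(2ℓ+j, j) = 0 holds, where 𝒯(n, j) = 2^{n-j} T(n, j) counts set partitions of an n-set into j odd-sized blocks. -/
open scoped Classical BigOperators Nat

/-!
`C(n, m) 𝒯(m, j)` counts the families of `j` pairwise disjoint odd-size subsets of an `n`-set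
that cover `m` points. With `n = 2ℓ + k`, the sum is therefore the signed count
`∑ (-1) ^ (k - #P)` over such families `P` whose blocks satisfy `∑ (#b - 1) = 2ℓ`.
Adding or removing the singleton block `{a}`, where `a` is the least point that is either
uncovered or a singleton block, is a sign-reversing involution on these families. It has no fixed
points: such a `P` would cover all `2ℓ + k` points with blocks of size at least `3`, so `k ≤ ℓ`.
-/

open Finset

section OddFamilies

variable {α β : Type*}

def IsOddFamily (P : Finset (Finset α)) : Prop :=
  (∀ b ∈ P, Odd #b) ∧ (P : Set (Finset α)).PairwiseDisjoint id

noncomputable def oddPartitions [Fintype α] [DecidableEq α] (s : Finset α) (j : ℕ) :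
    Finset (Finset (Finset α)) :=
  {P | #P = j ∧ IsOddFamily P ∧ P.sup id = s}

lemma oddPartCount_eq_card_oddPartitions (n j : ℕ) :
    oddPartCount n j = #(oddPartitions (univ : Finset (Fin n)) j) := by
  simp only [oddPartCount, oddPartitions, IsOddFamily, and_assoc]

lemma isOddFamily_map_iff (f : α ↪ β) (P : Finset (Finset α)) :
    IsOddFamily (P.map (mapEmbedding f).toEmbedding) ↔ IsOddFamily P := by
  simp only [IsOddFamily, forall_mem_map, RelEmbedding.coe_toEmbedding, mapEmbedding_apply,
    card_map, coe_map]
  rw [(mapEmbedding f).injective.injOn.pairwiseDisjoint_image]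
  simp [Set.PairwiseDisjoint, Set.Pairwise, Function.onFun, disjoint_map]

variable [DecidableEq α] [DecidableEq β]

lemma sup_map_mapEmbedding (f : α ↪ β) (P : Finset (Finset α)) :
    (P.map (mapEmbedding f).toEmbedding).sup id = (P.sup id).map f := by
  rw [sup_map]
  exact (apply_sup_eq_sup_comp (map f) (fun _ _ => map_union _ _) (map_empty f)).symm

lemma card_oddPartitions_map [Fintype α] [Fintype β] (f : α ↪ β) (s : Finset α) (j : ℕ) :
    #(oddPartitions (s.map f) j) = #(oddPartitions s j) := by
  symm
  refine card_bij (fun P _ => P.map (mapEmbedding f).toEmbedding) (fun P hP => ?_)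
    (fun P _ Q _ => (map_inj).1) (fun Q hQ => ?_)
  · simp only [oddPartitions, mem_filter, mem_univ, true_and, card_map, isOddFamily_map_iff,
      sup_map_mapEmbedding, map_inj] at hP ⊢
    exact hP
  · have hQsup := (mem_filter.1 hQ).2.2.2
    have hQ_sub : Q ⊆ (univ : Finset (Finset α)).map (mapEmbedding f).toEmbedding := by
      intro b hb
      obtain ⟨u, -, rfl⟩ := subset_map_iff.1 (hQsup ▸ le_sup (f := id) hb : b ⊆ s.map f)
      simp
    obtain ⟨P, -, rfl⟩ := subset_map_iff.1 hQ_sub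
    refine ⟨P, ?_, rfl⟩
    simpa only [oddPartitions, mem_filter, mem_univ, true_and, card_map, isOddFamily_map_iff,
      sup_map_mapEmbedding, map_inj] using hQ

lemma card_oddPartitions [Fintype α] (s : Finset α) (j : ℕ) :
    #(oddPartitions s j) = oddPartCount #s j := by
  rw [oddPartCount_eq_card_oddPartitions, ← card_oddPartitions_map
    (s.equivFin.symm.toEmbedding.trans (Function.Embedding.subtype (· ∈ s))), ← map_map, map_univ_equiv, univ_eq_attach, attach_map_val]

end OddFamilies

section Counting

variable {α : Type*} [Fintype α] [DecidableEq α]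

lemma card_filter_isOddFamily_card_sup (j m : ℕ) :
    #{P : Finset (Finset α) | #P = j ∧ IsOddFamily P ∧ #(P.sup id) = m} =
      (Fintype.card α).choose m * oddPartCount m j := by
  rw [card_eq_sum_card_fiberwise (f := fun P => P.sup id) (t := powersetCard m univ)
    (fun P hP => by simpa using (mem_filter.1 hP).2.2.2)]
  have hfiber : ∀ A ∈ powersetCard m (univ : Finset α),
      #{P ∈ {P : Finset (Finset α) | #P = j ∧ IsOddFamily P ∧ #(P.sup id) = m} |
        P.sup id = A} = oddPartCount m j := by
    intro A hA
    rw [← (mem_powersetCard.1 hA).2, ← card_oddPartitions A j, oddPartitions, filter_filter]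
    congr 1
    refine filter_congr fun P _ => ?_
    constructor
    · exact fun ⟨⟨hj, hP, _⟩, hA⟩ => ⟨hj, hP, hA⟩
    · rintro ⟨hj, hP, hA⟩
      exact ⟨⟨hj, hP, hA ▸ rfl⟩, hA⟩
  rw [sum_congr rfl hfiber, sum_const, card_powersetCard, card_univ, smul_eq_mul]

noncomputable def oddFamiliesWithExcess (e : ℕ) : Finset (Finset (Finset α)) :=
  {P | IsOddFamily P ∧ #(P.sup id) = e + #P}

lemma sum_oddFamiliesWithExcess {M : Type*} [AddCommMonoid M] (e : ℕ) (w : ℕ → M)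
    {t : Finset ℕ} (ht : ∀ P ∈ oddFamiliesWithExcess (α := α) e, #P ∈ t) :
    ∑ P ∈ oddFamiliesWithExcess (α := α) e, w #P =
      ∑ j ∈ t, ((Fintype.card α).choose (e + j) * oddPartCount (e + j) j) • w j := by
  rw [← sum_fiberwise_of_maps_to ht]
  refine sum_congr rfl fun j _ => ?_
  rw [← card_filter_isOddFamily_card_sup, sum_congr rfl fun P hP => congrArg w (mem_filter.1 hP).2,
    sum_const]
  congr 2
  ext P
  simp only [oddFamiliesWithExcess, mem_filter, mem_univ, true_and]
  constructor
  · rintro ⟨⟨hP, hsup⟩, rfl⟩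
    exact ⟨rfl, hP, hsup⟩
  · rintro ⟨rfl, hP, hsup⟩
    exact ⟨⟨hP, hsup⟩, rfl⟩

lemma card_mem_Icc_of_mem_oddFamiliesWithExcess {e k : ℕ} (he : 0 < e)
    (hcard : Fintype.card α = e + k) {P : Finset (Finset α)} (hP : P ∈ oddFamiliesWithExcess e) :
    #P ∈ Icc 1 k := by
  have hexcess := (mem_filter.1 hP).2.2
  have hle := card_le_univ (P.sup id)
  have hpos : P.Nonempty := by
    rw [nonempty_iff_ne_empty]
    rintro rfl
    simp only [sup_empty, bot_eq_empty, card_empty] at hexcess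
    omega
  exact mem_Icc.2 ⟨hpos.card_pos, by omega⟩

end Counting

section Toggle

variable {α : Type*} [DecidableEq α]

lemma sup_insert_singleton (P : Finset (Finset α)) (a : α) :
    (insert {a} P).sup id = insert a (P.sup id) := by
  rw [sup_insert, id, insert_eq, sup_eq_union]

lemma singleton_notMem_of_notMem_sup {P : Finset (Finset α)} {a : α} (ha : a ∉ P.sup id) :
    {a} ∉ P := fun h => ha (mem_sup.2 ⟨{a}, h, mem_singleton_self a⟩)

lemma notMem_sup_erase_singleton {P : Finset (Finset α)} (hP : IsOddFamily P) {a : α}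
    (ha : {a} ∈ P) : a ∉ (P.erase {a}).sup id := by
  simp only [mem_sup, id, mem_erase, not_exists, not_and]
  intro b ⟨hba, hb⟩ hab
  exact disjoint_left.1 (hP.2 hb ha hba) hab (mem_singleton_self a)

lemma isOddFamily_insert_singleton {P : Finset (Finset α)} {a : α} (ha : a ∉ P.sup id) :
    IsOddFamily (insert {a} P) ↔ IsOddFamily P := by
  simp only [IsOddFamily, forall_mem_insert, card_singleton, odd_one, true_and, coe_insert]
  rw [Set.pairwiseDisjoint_insert_of_notMem (by simpa using singleton_notMem_of_notMem_sup ha)]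
  simp only [id, disjoint_singleton_left]
  exact ⟨fun h => ⟨h.1, h.2.1⟩, fun h => ⟨h.1, h.2, fun b hb hab => ha (mem_sup.2 ⟨b, hb, hab⟩)⟩⟩

lemma card_sup_eq_sum_card {P : Finset (Finset α)} (hP : (P : Set (Finset α)).PairwiseDisjoint id) :
    #(P.sup id) = ∑ b ∈ P, #b := by
  rw [sup_eq_biUnion, card_biUnion hP]
  rfl

def toggleSingleton (P : Finset (Finset α)) (a : α) : Finset (Finset α) :=
  if {a} ∈ P then P.erase {a} else insert {a} P

lemma toggleSingleton_of_notMem_sup {P : Finset (Finset α)} {a : α} (ha : a ∉ P.sup id) :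
    toggleSingleton P a = insert {a} P :=
  if_neg (singleton_notMem_of_notMem_sup ha)

lemma toggleSingleton_insert_singleton {P : Finset (Finset α)} {a : α} (ha : a ∉ P.sup id) :
    toggleSingleton (insert {a} P) a = P := by
  rw [toggleSingleton, if_pos (mem_insert_self _ _),
    erase_insert (singleton_notMem_of_notMem_sup ha)]

variable [Fintype α]

def togglable (P : Finset (Finset α)) : Finset α :=
  {a | a ∉ P.sup id ∨ {a} ∈ P}

lemma togglable_insert_singleton {P : Finset (Finset α)} {a : α} (ha : a ∉ P.sup id) :
    togglable (insert {a} P) = togglable P := by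
  ext x
  by_cases hx : x = a
  · subst hx
    simp only [togglable, mem_filter, mem_univ, true_and, mem_insert_self, or_true]
    exact iff_of_true trivial (Or.inl ha)
  · simp [togglable, hx]

lemma togglable_eq_empty {P : Finset (Finset α)} :
    togglable P = ∅ ↔ P.sup id = univ ∧ ∀ a, {a} ∉ P := by
  simp [togglable, eq_empty_iff_forall_notMem, eq_univ_iff_forall, forall_and]

lemma three_mul_card_le_of_togglable_eq_empty {P : Finset (Finset α)} (hP : IsOddFamily P)
    (h : togglable P = ∅) : 3 * #P ≤ Fintype.card α := by
  obtain ⟨hcover, hno⟩ := togglable_eq_empty.1 h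
  have hblock : ∀ b ∈ P, 3 ≤ #b := by
    intro b hb
    obtain ⟨t, ht⟩ := hP.1 b hb
    rcases t with _ | t
    · obtain ⟨a, rfl⟩ := card_eq_one.1 ht
      exact absurd hb (hno a)
    · omega
  calc 3 * #P = ∑ _b ∈ P, 3 := by rw [sum_const, smul_eq_mul, mul_comm]
    _ ≤ ∑ b ∈ P, #b := sum_le_sum hblock
    _ = Fintype.card α := by rw [← card_sup_eq_sum_card hP.2, hcover, card_univ]

end Toggle

section Involution

variable {α : Type*} [Fintype α] [DecidableEq α]

lemma insert_singleton_mem_oddFamiliesWithExcess_iff {P : Finset (Finset α)} {a : α}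
    (ha : a ∉ P.sup id) (e : ℕ) :
    insert {a} P ∈ oddFamiliesWithExcess e ↔ P ∈ oddFamiliesWithExcess e := by
  simp only [oddFamiliesWithExcess, mem_filter, mem_univ, true_and,
    isOddFamily_insert_singleton ha, sup_insert_singleton, card_insert_of_notMem ha,
    card_insert_of_notMem (singleton_notMem_of_notMem_sup ha)]
  exact and_congr_right fun _ => by omega

lemma toggleSingleton_spec {e : ℕ} {P : Finset (Finset α)} (hP : P ∈ oddFamiliesWithExcess e)
    {a : α} (ha : a ∈ togglable P) :
    toggleSingleton P a ∈ oddFamiliesWithExcess e ∧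
      togglable (toggleSingleton P a) = togglable P ∧
      toggleSingleton (toggleSingleton P a) a = P ∧
      (#(toggleSingleton P a) = #P + 1 ∨ #P = #(toggleSingleton P a) + 1) := by
  by_cases hsingle : {a} ∈ P
  · obtain ⟨P, haP, rfl⟩ : ∃ P₀, a ∉ P₀.sup id ∧ P = insert {a} P₀ :=
      ⟨P.erase {a}, notMem_sup_erase_singleton (mem_filter.1 hP).2.1 hsingle,
        (insert_erase hsingle).symm⟩
    rw [toggleSingleton_insert_singleton haP, toggleSingleton_of_notMem_sup haP,
      togglable_insert_singleton haP, card_insert_of_notMem (singleton_notMem_of_notMem_sup haP)]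
    exact ⟨(insert_singleton_mem_oddFamiliesWithExcess_iff haP e).1 hP, rfl, rfl, Or.inr rfl⟩
  · have haP : a ∉ P.sup id := ((mem_filter.1 ha).2).resolve_right hsingle
    rw [toggleSingleton_of_notMem_sup haP, toggleSingleton_insert_singleton haP,
      togglable_insert_singleton haP, card_insert_of_notMem hsingle]
    exact ⟨(insert_singleton_mem_oddFamiliesWithExcess_iff haP e).2 hP, rfl, rfl, Or.inl rfl⟩

lemma togglable_nonempty {e : ℕ} (he : 3 * e < 2 * Fintype.card α) {P : Finset (Finset α)}
    (hP : P ∈ oddFamiliesWithExcess e) : (togglable P).Nonempty := by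
  rw [nonempty_iff_ne_empty]
  intro hempty
  obtain ⟨hodd, hexcess⟩ := (mem_filter.1 hP).2
  have h3 := three_mul_card_le_of_togglable_eq_empty hodd hempty
  rw [(togglable_eq_empty.1 hempty).1, card_univ] at hexcess
  omega

theorem sum_neg_one_pow_card_oddFamiliesWithExcess [LinearOrder α] {e : ℕ}
    (he : 3 * e < 2 * Fintype.card α) :
    ∑ P ∈ oddFamiliesWithExcess (α := α) e, (-1 : ℤ) ^ #P = 0 := by
  set pivot := fun P (hP : P ∈ oddFamiliesWithExcess e) =>
    (togglable P).min' (togglable_nonempty he hP)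
  have hspec := fun (P : Finset (Finset α)) (hP : P ∈ oddFamiliesWithExcess e) =>
    toggleSingleton_spec hP (min'_mem _ (togglable_nonempty he hP))
  refine sum_involution (fun P hP => toggleSingleton P (pivot P hP)) (fun P hP => ?_)
    (fun P hP _ => ?_) (fun P hP => (hspec P hP).1) (fun P hP => ?_)
  · rcases (hspec P hP).2.2.2 with h | h <;> rw [h, pow_succ] <;> ring
  · rcases (hspec P hP).2.2.2 with h | h <;> exact fun hQ => by rw [hQ] at h; omega
  · simp only [pivot, (hspec P hP).2.1]
    exact (hspec P hP).2.2.1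

end Involution

theorem stmt10_general (k ℓ : ℕ) (h1 : 1 ≤ ℓ) (h2 : ℓ < k) :
    ∑ j ∈ Finset.Icc 1 k,
      (-1 : ℤ) ^ (k - j) * ((2 * ℓ + k).choose (2 * ℓ + j)) *
        (oddPartCount (2 * ℓ + j) j : ℤ) = 0 := by
  have hrange := fun P ↦ card_mem_Icc_of_mem_oddFamiliesWithExcess (P := P) (by omega)
    (Fintype.card_fin (2 * ℓ + k))
  have hsign : ∀ j ∈ Icc 1 k, (-1 : ℤ) ^ (k - j) = (-1) ^ j * (-1) ^ k := fun j hj => by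
    rw [← pow_mul_pow_sub (-1 : ℤ) (mem_Icc.1 hj).2, ← mul_assoc, ← mul_pow, neg_one_mul, neg_neg,
      one_pow, one_mul]
  have hsum := sum_oddFamiliesWithExcess (2 * ℓ) (fun j => (-1 : ℤ) ^ j * (-1) ^ k) hrange
  rw [Fintype.card_fin, ← sum_mul, sum_neg_one_pow_card_oddFamiliesWithExcess
    (by rw [Fintype.card_fin]; omega), zero_mul] at hsum
  rw [hsum]
  refine sum_congr rfl fun j hj => ?_
  rw [hsign j hj, nsmul_eq_mul]
  push_cast
  ring

theorem stmt10 (k ℓ : ℕ) (hk : 2 ≤ k) (h1 : 1 ≤ ℓ) (h2 : ℓ < k) :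
    ∑ j ∈ Finset.Icc 1 k,
      (-1 : ℤ) ^ (k - j) * ((2 * ℓ + k).choose (2 * ℓ + j)) *
        (oddPartCount (2 * ℓ + j) j : ℤ) = 0 :=
  stmt10_general k ℓ h1 h2
end

section
/- For every ℓ ∈ ℕ₀, the ℓ-th power of the sinc function has the power series expansion sinc^ℓ(z) = 1 + ∑_{j=1}^{∞} (-1)^j [T(ℓ+2j, ℓ) / C(ℓ+2j, ℓ)] (2z)^{2j} / (2j)!, valid for all z ∈ ℂ. -/
open scoped Classical BigOperators Nat

/-!
Since `2 i sin z = e^{iz} - e^{-iz}`, the binomial theorem gives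
`(2 i sin z)^ℓ = ∑_j (-1)^j C(ℓ,j) exp((ℓ/2 - j) · 2iz)`, and expanding the exponentials shows that
the coefficient of `(2iz)^n / n!` is `∑_j (-1)^j C(ℓ,j) (ℓ/2 - j)^n = ℓ! T(n,ℓ)`. This is the
`ℓ`-th forward difference of `r ↦ r^n` at `-ℓ/2`, so it vanishes for `n < ℓ` and equals `ℓ!` for
`n = ℓ`; the symmetry `j ↦ ℓ - j` makes it vanish when `n + ℓ` is odd. Only `n = ℓ + 2j`
survives, and
`(2iz)^(ℓ+2j) / (ℓ+2j)! = (2iz)^ℓ (-1)^j (2z)^(2j) / (C(ℓ+2j,ℓ) ℓ! (2j)!)`,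
so dividing by `(2iz)^ℓ` gives the series for `sinc^ℓ`.
-/

open Finset Complex

lemma factorial_mul_centralT (n ℓ : ℕ) :
    ℓ ! * centralT n ℓ =
      ∑ j ∈ range (ℓ + 1), (-1 : ℝ) ^ j * ℓ.choose j * ((ℓ : ℝ) / 2 - j) ^ n := by
  rw [centralT, ← mul_assoc, mul_one_div_cancel (by positivity), one_mul]

lemma factorial_mul_centralT_eq_sum_reflect (n ℓ : ℕ) :
    ℓ ! * centralT n ℓ =
      ∑ k ∈ range (ℓ + 1), (-1 : ℝ) ^ (ℓ - k) * ℓ.choose k * ((k : ℝ) - ℓ / 2) ^ n := by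
  rw [factorial_mul_centralT, ← sum_range_reflect]
  refine sum_congr rfl fun k hk => ?_
  have hk : k ≤ ℓ := Nat.lt_succ_iff.mp (mem_range.mp hk)
  rw [Nat.add_sub_cancel, Nat.choose_symm hk, Nat.cast_sub hk]
  ring

lemma factorial_mul_centralT_eq_fwdDiff (n ℓ : ℕ) :
    ℓ ! * centralT n ℓ = (fwdDiff 1)^[ℓ] (fun r : ℝ => r ^ n) (-(ℓ / 2)) := by
  rw [factorial_mul_centralT_eq_sum_reflect, fwdDiff_iter_eq_sum_shift]
  refine sum_congr rfl fun k _ => ?_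
  simp only [zsmul_eq_mul, nsmul_eq_mul, mul_one]
  push_cast
  ring

lemma centralT_eq_zero_of_lt {n ℓ : ℕ} (h : n < ℓ) : centralT n ℓ = 0 := by
  simpa [fwdDiff_iter_pow_eq_zero_of_lt h, Nat.factorial_ne_zero] using
    factorial_mul_centralT_eq_fwdDiff n ℓ

lemma centralT_self (ℓ : ℕ) : centralT ℓ ℓ = 1 := by
  simpa [fwdDiff_iter_eq_factorial, Nat.factorial_ne_zero] using
    factorial_mul_centralT_eq_fwdDiff ℓ ℓ

lemma centralT_eq_zero_of_odd {n ℓ : ℕ} (h : Odd (n + ℓ)) : centralT n ℓ = 0 := by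
  obtain ⟨m, hm⟩ := h
  have hflip : ∀ k ∈ range (ℓ + 1), (-1 : ℝ) ^ (ℓ - k) * ℓ.choose k * ((k : ℝ) - ℓ / 2) ^ n =
      -((-1 : ℝ) ^ k * ℓ.choose k * ((ℓ : ℝ) / 2 - k) ^ n) := by
    intro k hk
    have hk : k ≤ ℓ := Nat.lt_succ_iff.mp (mem_range.mp hk)
    have hsign : (-1 : ℝ) ^ (ℓ - k) * (-1) ^ n = -(-1) ^ k := by
      rw [← pow_add, show -(-1 : ℝ) ^ k = (-1) ^ (k + 1) by ring, neg_one_pow_eq_pow_mod_two,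
        neg_one_pow_eq_pow_mod_two (k + 1)]
      congr 1
      omega
    rw [show (k : ℝ) - ℓ / 2 = -((ℓ : ℝ) / 2 - k) by ring, neg_pow ((ℓ : ℝ) / 2 - k)]
    linear_combination ((ℓ.choose k : ℝ) * ((ℓ : ℝ) / 2 - k) ^ n) * hsign
  have hreflect := factorial_mul_centralT_eq_sum_reflect n ℓ
  rw [sum_congr rfl hflip, sum_neg_distrib, ← factorial_mul_centralT] at hreflect
  have hzero : (ℓ ! : ℝ) * centralT n ℓ = 0 := by linarith
  simpa [Nat.factorial_ne_zero] using hzero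

lemma centralT_eq_zero_of_notMem_range {n ℓ : ℕ} (h : n ∉ Set.range (fun j : ℕ => ℓ + 2 * j)) :
    centralT n ℓ = 0 := by
  rcases lt_or_ge n ℓ with hlt | hle
  · exact centralT_eq_zero_of_lt hlt
  · refine centralT_eq_zero_of_odd (Nat.not_even_iff_odd.mp fun ⟨m, hm⟩ => h ⟨m - ℓ, ?_⟩)
    change ℓ + 2 * (m - ℓ) = n
    omega

lemma hasSum_sum_mul_exp {ι : Type*} (s : Finset ι) (a c : ι → ℂ) (w : ℂ) :
    HasSum (fun n => (∑ i ∈ s, a i * c i ^ n) * w ^ n / n !) (∑ i ∈ s, a i * exp (c i * w)) := by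
  have hterm (n : ℕ) :
      (∑ i ∈ s, a i * c i ^ n) * w ^ n / n ! = ∑ i ∈ s, a i * ((c i * w) ^ n / n !) := by
    rw [sum_mul, sum_div]
    exact sum_congr rfl fun i _ => by ring
  simpa only [hterm, exp_eq_exp_ℂ] using hasSum_sum fun i (_ : i ∈ s) =>
    (NormedSpace.expSeries_div_hasSum_exp (c i * w)).mul_left (a i)

lemma two_mul_I_mul_sin_pow (ℓ : ℕ) (z : ℂ) :
    (2 * I * sin z) ^ ℓ =
      ∑ j ∈ range (ℓ + 1), (-1) ^ j * ℓ.choose j * exp (((ℓ : ℂ) / 2 - j) * (2 * I * z)) := by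
  have h : 2 * I * sin z = -exp (-z * I) + exp (z * I) := by
    rw [sin]; ring_nf; rw [I_sq]; ring
  rw [h, add_pow]
  refine sum_congr rfl fun j hj => ?_
  have hj : j ≤ ℓ := Nat.lt_succ_iff.mp (mem_range.mp hj)
  rw [neg_pow, ← exp_nat_mul, ← exp_nat_mul, Nat.cast_sub hj,
    show ((ℓ : ℂ) / 2 - j) * (2 * I * z) = j * (-z * I) + (ℓ - j) * (z * I) by ring, exp_add]
  ring

lemma hasSum_two_mul_I_mul_sin_pow (ℓ : ℕ) (z : ℂ) :
    HasSum (fun n => ((ℓ ! * centralT n ℓ : ℝ) : ℂ) * (2 * I * z) ^ n / n !)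
      ((2 * I * sin z) ^ ℓ) := by
  rw [two_mul_I_mul_sin_pow]
  convert hasSum_sum_mul_exp (range (ℓ + 1)) (fun j => (-1) ^ j * ℓ.choose j)
    (fun j => (ℓ : ℂ) / 2 - j) (2 * I * z) using 4 with n
  rw [factorial_mul_centralT]
  push_cast
  rfl

lemma centralT_term_eq (ℓ j : ℕ) (z : ℂ) :
    ((ℓ ! * centralT (ℓ + 2 * j) ℓ : ℝ) : ℂ) * (2 * I * z) ^ (ℓ + 2 * j) / (ℓ + 2 * j)! =
      (2 * I * z) ^ ℓ * ((-1) ^ j * (centralT (ℓ + 2 * j) ℓ : ℂ) / (ℓ + 2 * j).choose ℓ *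
        (2 * z) ^ (2 * j) / (2 * j)!) := by
  have hfact : ((ℓ + 2 * j)! : ℂ) = (ℓ + 2 * j).choose ℓ * ℓ ! * (2 * j)! := by
    rw [Nat.choose_symm_add]
    exact_mod_cast (Nat.add_choose_mul_factorial_mul_factorial ℓ (2 * j)).symm
  have hpow : (2 * I * z) ^ (2 * j) = (-1) ^ j * (2 * z) ^ (2 * j) := by
    have hsq : (2 * I * z) ^ 2 = -(2 * z) ^ 2 := by linear_combination 4 * z ^ 2 * I_sq
    rw [pow_mul, pow_mul, hsq, neg_pow]
  have hchoose : ((ℓ + 2 * j).choose ℓ : ℂ) ≠ 0 := by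
    exact_mod_cast (Nat.choose_pos (Nat.le_add_right ℓ (2 * j))).ne'
  have hfactorial : (ℓ ! : ℂ) ≠ 0 := Nat.cast_ne_zero.mpr ℓ.factorial_ne_zero
  rw [hfact, pow_add, hpow]
  push_cast
  field_simp

theorem stmt12 (ℓ : ℕ) (z : ℂ) :
    HasSum (fun j : ℕ =>
      (-1 : ℂ) ^ j * ((centralT (ℓ + 2 * j) ℓ : ℝ) : ℂ) / ((ℓ + 2 * j).choose ℓ) *
        (2 * z) ^ (2 * j) / ((2 * j)!))
      (sinc z ^ ℓ) := by
  rcases eq_or_ne z 0 with rfl | hz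
  · convert hasSum_single 0 fun j (hj : j ≠ 0) => ?_
    · simp [sinc, centralT_self]
    · simp [hj]
  have hinj : Function.Injective fun j : ℕ => ℓ + 2 * j := fun a b h => by simp at h; omega
  have h := hasSum_two_mul_I_mul_sin_pow ℓ z
  rw [← hinj.hasSum_iff fun n hn => by simp [centralT_eq_zero_of_notMem_range hn]] at h
  simp only [Function.comp_def, centralT_term_eq] at h
  have hsin : 2 * I * sin z = 2 * I * z * sinc z := by
    rw [sinc, if_neg hz]
    field_simp
  rwa [hsin, mul_pow (2 * I * z), hasSum_mul_left_iff (by simp [hz])] at h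
end

section
/- For every ℓ ∈ ℕ and all z ∈ ℂ, sinc^ℓ(z) = 1 + ∑_{j=1}^{∞} (-1)^j [∑_{k=0}^{2j} (-1)^k C(2j, k) (2/ℓ)^k S(k+ℓ, ℓ) / C(k+ℓ, ℓ)] (ℓz)^{2j} / (2j)!. -/
open scoped Classical BigOperators Nat

/-!
Expanding `(exp y - 1) ^ m` binomially and each `exp ((m - j) * y)` as a power series, the
explicit formula `m! S(n, m) = ∑ j, (-1) ^ j C(m, j) (m - j) ^ n` identifies the exponential
generating function of `m! S(n, m)` with `(exp y - 1) ^ m`; dividing by `y ^ m` gives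
`∑ k, S(k + m, m) / C(k + m, m) * y ^ k / k! = ((exp y - 1) / y) ^ m`.
At `y = -2w` this is `exp (-m w) * sinhc w ^ m`, so a Cauchy product with the series of
`exp (m w)` expands `sinhc w ^ m` in powers of `m w` with the binomial sums of the statement as
coefficients. Finally `sinc z = sinhc (i z)`, and `sinhc` is even, so averaging the expansions at
`i z` and `-i z` keeps only the even powers, where `(i ℓ z) ^ (2j) = (-1) ^ j (ℓ z) ^ (2j)`.
-/

open Finset Nat

theorem stirlingS_eq_stirlingSecond_s14 : stirlingS = stirlingSecond := by
  funext n k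
  induction n generalizing k with
  | zero => cases k <;> rfl
  | succ n ih =>
    cases k with
    | zero => rfl
    | succ k => rw [stirlingSecond_succ_succ, ← ih, ← ih]; rfl

theorem Nat.stirlingSecond_le_pow (n k : ℕ) : stirlingSecond n k ≤ (k + 1) ^ n := by
  induction n generalizing k with
  | zero => cases k <;> simp
  | succ n ih =>
    cases k with
    | zero => simp
    | succ k =>
      calc stirlingSecond (n + 1) (k + 1)
          ≤ (k + 1) * (k + 2) ^ n + (k + 1) ^ n := by
            rw [stirlingSecond_succ_succ]; gcongr <;> apply ih
        _ ≤ (k + 1) * (k + 2) ^ n + (k + 2) ^ n := by gcongr; omega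
        _ = (k + 1 + 1) ^ (n + 1) := by ring

theorem Nat.factorial_mul_stirlingSecond {R : Type*} [CommRing R] (n k : ℕ) :
    (k ! : R) * stirlingSecond n k =
      ∑ j ∈ range (k + 1), (-1) ^ j * k.choose j * ((k : R) - j) ^ n := by
  induction n generalizing k with
  | zero =>
    cases k with
    | zero => simp
    | succ k =>
      have := Int.alternating_sum_range_choose_of_ne (n := k + 1) (by omega)
      simpa using (congrArg (Int.cast : ℤ → R) this).symm
  | succ n ih =>
    cases k with
    | zero => simp
    | succ k =>
      -- split `(k + 1 - j) ^ (n + 1)` as `(k + 1) * (k + 1 - j) ^ n - j * (k + 1 - j) ^ n`;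
      -- the second part reindexes via `j * C(k+1, j) = (k + 1) * C(k, j - 1)`
      have hshift : ∑ j ∈ range (k + 2),
            (j : R) * ((-1) ^ j * (k + 1).choose j * ((k + 1 : ℕ) - j : R) ^ n)
          = -(k + 1) * ∑ j ∈ range (k + 1), (-1) ^ j * k.choose j * ((k : R) - j) ^ n := by
        rw [sum_range_succ', mul_sum]
        simp only [Nat.cast_zero, zero_mul, add_zero]
        refine sum_congr rfl fun j _ => ?_
        have h := congrArg (Nat.cast : ℕ → R) (Nat.add_one_mul_choose_eq k j)
        push_cast at h ⊢
        linear_combination (-1) ^ j * ((k : R) - j) ^ n * h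
      calc ((k + 1)! : R) * stirlingSecond (n + 1) (k + 1)
          = (k + 1) * ((k + 1)! * stirlingSecond n (k + 1))
              + (k + 1) * (k ! * stirlingSecond n k) := by
            rw [stirlingSecond_succ_succ, Nat.factorial_succ]; push_cast; ring
        _ = (k + 1) * ∑ j ∈ range (k + 2),
                (-1) ^ j * (k + 1).choose j * ((k + 1 : ℕ) - j : R) ^ n
            - ∑ j ∈ range (k + 2),
                (j : R) * ((-1) ^ j * (k + 1).choose j * ((k + 1 : ℕ) - j : R) ^ n) := by
            rw [ih, ih, hshift]; ring
        _ = _ := by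
            rw [mul_sum, ← sum_sub_distrib]
            exact sum_congr rfl fun j _ => by push_cast; ring

theorem Complex.hasSum_pow_div_factorial (x : ℂ) :
    HasSum (fun n => x ^ n / n !) (Complex.exp x) := by
  rw [Complex.exp_eq_exp_ℂ]
  exact NormedSpace.expSeries_div_hasSum_exp x

theorem hasSum_exp_sub_one_pow (m : ℕ) (y : ℂ) :
    HasSum (fun n => (m ! : ℂ) * stirlingSecond n m * y ^ n / n !) ((Complex.exp y - 1) ^ m) := by
  have hexp : ∀ j ∈ range (m + 1), HasSum
      (fun n => (-1) ^ j * m.choose j * ((((m : ℂ) - j) * y) ^ n / n !))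
      ((-1) ^ j * m.choose j * Complex.exp (((m : ℂ) - j) * y)) := fun j _ =>
    (Complex.hasSum_pow_div_factorial _).mul_left _
  convert hasSum_sum hexp using 1
  · funext n
    rw [factorial_mul_stirlingSecond, sum_mul, sum_div]
    refine sum_congr rfl fun j _ => ?_
    rw [mul_pow]
    ring
  · rw [sub_eq_neg_add, add_pow]
    refine sum_congr rfl fun j hj => ?_
    rw [← Complex.exp_nat_mul, Nat.cast_sub (by simpa [Nat.lt_succ_iff] using hj)]
    ring

theorem hasSum_exp_sub_one_div_pow (m : ℕ) {y : ℂ} (hy : y ≠ 0) :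
    HasSum (fun k => (stirlingSecond (k + m) m / (k + m).choose m : ℂ) * y ^ k / k !)
      (((Complex.exp y - 1) / y) ^ m) := by
  have h := (hasSum_nat_add_iff' m).mpr (hasSum_exp_sub_one_pow m y)
  rw [sum_eq_zero fun i hi => by rw [stirlingSecond_eq_zero_of_lt (mem_range.mp hi)]; simp,
    sub_zero] at h
  rw [div_pow]
  refine (h.div_const (y ^ m)).congr_fun fun k => ?_
  have hfac : ((k + m).choose m * k ! * m ! : ℂ) = (k + m)! := by
    exact_mod_cast add_choose_mul_factorial_mul_factorial k m
  have hchoose : ((k + m).choose m : ℂ) ≠ 0 := by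
    exact_mod_cast (choose_pos (Nat.le_add_left m k)).ne'
  rw [← hfac, pow_add]
  field_simp
  rw [mul_div_mul_right _ _ (mod_cast factorial_ne_zero m)]

theorem summable_norm_stirlingSecond_div_choose (m : ℕ) (y : ℂ) :
    Summable fun k =>
      ‖(stirlingSecond (k + m) m / (k + m).choose m : ℂ) * y ^ k / (k !)‖ := by
  refine .of_nonneg_of_le (fun _ => norm_nonneg _) (fun k => ?_)
    ((Real.summable_pow_div_factorial ((m + 1) * ‖y‖)).mul_left ((m + 1 : ℝ) ^ m))
  have hS : (stirlingSecond (k + m) m : ℝ) ≤ (m + 1) ^ (k + m) := by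
    exact_mod_cast stirlingSecond_le_pow (k + m) m
  have hC : (1 : ℝ) ≤ (k + m).choose m := by
    exact_mod_cast choose_pos (Nat.le_add_left m k)
  calc ‖(stirlingSecond (k + m) m / (k + m).choose m : ℂ) * y ^ k / (k !)‖
      = stirlingSecond (k + m) m / (k + m).choose m * ‖y‖ ^ k / k ! := by
        simp only [norm_div, norm_mul, norm_pow, Complex.norm_natCast]
    _ ≤ (m + 1) ^ (k + m) * ‖y‖ ^ k / k ! := by
        gcongr
        exact (div_le_self (by positivity) hC).trans hS
    _ = (m + 1) ^ m * (((m + 1) * ‖y‖) ^ k / k !) := by rw [pow_add, mul_pow]; ring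

theorem HasSum.mul_cexp {b : ℕ → ℂ} {y s : ℂ}
    (hs : HasSum (fun k => b k * y ^ k / k !) s) (hb : Summable fun k => ‖b k * y ^ k / (k !)‖)
    (x : ℂ) :
    HasSum (fun n => (∑ k ∈ range (n + 1), n.choose k * b k * y ^ k * x ^ (n - k)) / n !)
      (s * Complex.exp x) := by
  have h := hasSum_sum_range_mul_of_summable_norm hb (NormedSpace.norm_expSeries_div_summable x)
  rw [hs.tsum_eq, (Complex.hasSum_pow_div_factorial x).tsum_eq] at h
  refine h.congr_fun fun n => ?_
  rw [sum_div]
  refine sum_congr rfl fun k hk => ?_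
  have hkn := Nat.lt_succ_iff.mp (mem_range.mp hk)
  have hfac : (n.choose k * k ! * (n - k)! : ℂ) = n ! := by
    exact_mod_cast choose_mul_factorial_mul_factorial hkn
  have hC : (n.choose k : ℂ) ≠ 0 := by exact_mod_cast (choose_pos hkn).ne'
  rw [← hfac]
  field_simp

theorem sinhc_neg (w : ℂ) : sinhc (-w) = sinhc w := by
  by_cases hw : w = 0
  · simp [hw]
  · rw [sinhc, sinhc, if_neg (neg_ne_zero.mpr hw), if_neg hw, Complex.sinh_neg, neg_div_neg_eq]

theorem sinc_eq_sinhc_mul_I (z : ℂ) : sinc z = sinhc (z * Complex.I) := by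
  by_cases hz : z = 0
  · simp [hz, sinc, sinhc]
  · rw [sinc, sinhc, if_neg hz, if_neg (mul_ne_zero hz Complex.I_ne_zero), Complex.sinh_mul_I]
    field_simp [Complex.I_ne_zero]

theorem exp_neg_two_mul_sub_one_div_mul_exp {w : ℂ} (hw : w ≠ 0) :
    (Complex.exp (-2 * w) - 1) / (-2 * w) * Complex.exp w = sinhc w := by
  have hexp : Complex.exp (-2 * w) * Complex.exp w = Complex.exp (-w) := by
    rw [← Complex.exp_add]; ring_nf
  rw [sinhc, if_neg hw, Complex.sinh, div_mul_eq_mul_div, sub_mul, hexp, one_mul]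
  field_simp
  ring

theorem hasSum_sinhc_pow {m : ℕ} (hm : m ≠ 0) (w : ℂ) :
    HasSum (fun n => (∑ k ∈ range (n + 1), (-1) ^ k * n.choose k * (2 / m : ℂ) ^ k *
        stirlingSecond (k + m) m / (k + m).choose m) * (m * w) ^ n / n !) (sinhc w ^ m) := by
  rcases eq_or_ne w 0 with rfl | hw
  · rw [show sinhc 0 ^ m = 1 by simp [sinhc]]
    refine (hasSum_ite_eq 0 (1 : ℂ)).congr_fun fun n => ?_
    rcases n with _ | n <;> simp [stirlingSecond_self]
  have h := (hasSum_exp_sub_one_div_pow m (by simpa using hw : -2 * w ≠ 0)).mul_cexp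
    (summable_norm_stirlingSecond_div_choose m _) (m * w)
  rw [Complex.exp_nat_mul, ← mul_pow, exp_neg_two_mul_sub_one_div_mul_exp hw] at h
  refine h.congr_fun fun n => ?_
  rw [sum_mul]
  congr 1
  refine sum_congr rfl fun k hk => ?_
  have hm' : (m : ℂ) ≠ 0 := by exact_mod_cast hm
  rw [← pow_mul_pow_sub _ (Nat.lt_succ_iff.mp (mem_range.mp hk)), div_pow, mul_pow (-2 : ℂ),
    neg_pow (2 : ℂ)]
  field_simp
  ring

theorem HasSum.comp_two_mul {K : Type*} [Field K] [CharZero K] [TopologicalSpace K]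
    [IsTopologicalRing K] {g : ℕ → K} {s : K} (h : HasSum g s)
    (h' : HasSum (fun n => (-1) ^ n * g n) s) : HasSum (fun j => g (2 * j)) s := by
  have hodd : ∀ n ∉ Set.range (2 * ·), (if Even n then g n else 0) = 0 := fun n hn =>
    if_neg fun ⟨j, hj⟩ => hn ⟨j, show 2 * j = n by omega⟩
  have heven := (h.add h').div_const 2
  rw [add_self_div_two] at heven
  have hsel : HasSum (fun n => if Even n then g n else 0) s := heven.congr_fun fun n => by
    rcases n.even_or_odd with hn | hn
    · rw [if_pos hn, hn.neg_one_pow]; ring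
    · rw [if_neg (Nat.not_even_iff_odd.mpr hn), hn.neg_one_pow]; ring
  exact (((mul_right_injective₀ two_ne_zero).hasSum_iff hodd).mpr hsel).congr_fun fun j =>
    (if_pos (even_two_mul j)).symm

theorem stmt14 (ℓ : ℕ) (hℓ : 1 ≤ ℓ) (z : ℂ) :
    HasSum (fun j : ℕ =>
      (-1 : ℂ) ^ j *
        (∑ k ∈ Finset.range (2 * j + 1),
          (-1 : ℂ) ^ k * ((2 * j).choose k) * (2 / (ℓ : ℂ)) ^ k *
            (stirlingS (k + ℓ) ℓ) / ((k + ℓ).choose ℓ)) *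
        ((ℓ : ℂ) * z) ^ (2 * j) / ((2 * j)!))
      (sinc z ^ ℓ) := by
  have hℓ' : ℓ ≠ 0 := by omega
  have h := hasSum_sinhc_pow hℓ' (z * Complex.I)
  have h' := hasSum_sinhc_pow hℓ' (-(z * Complex.I))
  rw [sinhc_neg] at h'
  rw [sinc_eq_sinhc_mul_I, stirlingS_eq_stirlingSecond_s14]
  refine (h.comp_two_mul (h'.congr_fun fun n => ?_)).congr_fun fun j => ?_
  · rw [mul_neg, neg_pow]; ring
  · simp only [mul_pow, pow_mul Complex.I, Complex.I_sq]; ring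
end

section
/- For m ∈ ℕ and 1 ≤ k ≤ 2m, the partial Bell polynomial evaluated at the derivatives of sinc at 0 satisfies B_{2m,k}(0, -1/3, 0, 1/5, ..., x_{2m-k+1}) = (-1)^{m+k} (2^{2m}/k!) ∑_{j=1}^{k} (-1)^j C(k, j) T(2m+j, j) / C(2m+j, j), where x_i = (1/(i+1)) cos(iπ/2). -/
open scoped Classical BigOperators Nat

/-!
`B_{n,k}(x) = n!/k! · [tⁿ] (∑ᵢ xᵢ tⁱ/i!)ᵏ`, and for `xᵢ = sinc⁽ⁱ⁾(0)` the inner series is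
`sinc t - 1`, so the binomial theorem reduces everything to `[t^{2m}] sincʲ = [t^{2m+j}] sinʲ`.
Since `sin t = (e^{it} - e^{-it}) / 2i` and `(e^{t/2} - e^{-t/2})ʲ = j! ∑ₙ T(n, j) tⁿ/n!` is the
generating function of the central factorial numbers, that coefficient is
`(-4)^m j! T(2m+j, j) / (2m+j)!`.
-/

namespace PowerSeries

theorem coeff_pow_eq_of_trunc_eq {R : Type*} [CommSemiring R] {N n : ℕ} {f g : R⟦X⟧}
    (h : trunc N f = trunc N g) (hn : n < N) (k : ℕ) :
    coeff n (f ^ k) = coeff n (g ^ k) := by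
  have hpow : trunc N (f ^ k) = trunc N (g ^ k) := by
    rw [← trunc_trunc_pow, h, trunc_trunc_pow]
  simpa [coeff_trunc, hn] using congrArg (Polynomial.coeff · n) hpow

theorem coeff_sum_C_mul_X_pow_pow {R ι : Type*} [CommSemiring R] [Fintype ι] [DecidableEq ι]
    (a : ι → R) (w : ι → ℕ) (n k : ℕ) :
    coeff n ((∑ i, C (a i) * X ^ w i) ^ k) =
      ∑ g ∈ (Finset.univ.piAntidiag k).filter (fun g => ∑ i, w i * g i = n),
        (Nat.multinomial Finset.univ g : R) * ∏ i, a i ^ g i := by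
  rw [Finset.sum_pow_eq_sum_piAntidiag, map_sum, Finset.sum_filter]
  refine Finset.sum_congr rfl fun g _ => ?_
  simp_rw [mul_pow, ← map_pow, ← pow_mul, Finset.prod_mul_distrib, ← map_prod,
    Finset.prod_pow_eq_pow_sum, ← map_natCast (C (R := R)), ← mul_assoc, ← map_mul,
    coeff_C_mul_X_pow, mul_comm (w _)]
  exact if_congr eq_comm rfl rfl

theorem coeff_sub_one_pow {R : Type*} [CommRing R] (f : R⟦X⟧) (n k : ℕ) :
    coeff n ((f - 1) ^ k) =
      ∑ j ∈ Finset.range (k + 1), (-1) ^ (j + k) * k.choose j * coeff n (f ^ j) := by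
  rw [sub_pow, map_sum]
  refine Finset.sum_congr rfl fun j _ => ?_
  rw [one_pow, mul_one, show (-1) ^ (j + k) * f ^ j * (k.choose j : R⟦X⟧) =
      C ((-1 : R) ^ (j + k) * k.choose j) * f ^ j by
    simp only [map_mul, map_pow, map_neg, map_one, map_natCast]; ring, coeff_C_mul]

theorem coeff_rescale_exp {K : Type*} [Field K] [CharZero K] (a : K) (n : ℕ) :
    coeff n (rescale a (exp K)) = a ^ n / n ! := by
  simp [coeff_exp, div_eq_mul_inv]

theorem rescale_exp_pow_s16 {A : Type*} [CommRing A] [Algebra ℚ A] (a : A) (q : ℕ) :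
    rescale a (exp A) ^ q = rescale (q * a) (exp A) := by
  rw [← map_pow, exp_pow_eq_rescale_exp, rescale_rescale]

end PowerSeries

open PowerSeries

theorem bellB_eq_sum_piAntidiag (n k : ℕ) (x : ℕ → ℝ) :
    bellB n k x =
      ∑ g ∈ (Finset.univ.piAntidiag k).filter (fun g : Fin n → ℕ => ∑ i, (i.1 + 1) * g i = n),
        ((n ! : ℝ) / ∏ i, (g i)!) * ∏ i, (x (i.1 + 1) / (i.1 + 1)!) ^ g i := by
  have hbound : ∀ g ∈ (Finset.univ.piAntidiag k).filter
      (fun g : Fin n → ℕ => ∑ i, (i.1 + 1) * g i = n), ∀ i, g i < n + 1 := by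
    intro g hg i
    rw [Finset.mem_filter] at hg
    have := hg.2 ▸ Finset.single_le_sum (f := fun j : Fin n => (j.1 + 1) * g j)
      (fun _ _ => Nat.zero_le _) (Finset.mem_univ i)
    nlinarith
  refine Finset.sum_nbij' (fun ℓ i => (ℓ i : ℕ)) (fun g i => Fin.ofNat (n + 1) (g i))
    ?_ ?_ ?_ ?_ ?_
  · intro ℓ hℓ
    simp_all
  · intro g hg
    simp_all [Nat.mod_eq_of_lt (hbound g hg _)]
  · intro ℓ _
    simp
  · intro g hg
    funext i
    simp [Nat.mod_eq_of_lt (hbound g hg i)]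
  · intro ℓ _
    simp

theorem bellB_eq_coeff_pow (n k : ℕ) (x : ℕ → ℝ) (f : ℝ⟦X⟧) (hf0 : constantCoeff f = 0)
    (hf : ∀ i ∈ Finset.Icc 1 n, coeff i f = x i / i !) :
    bellB n k x = (n ! : ℝ) / k ! * coeff n (f ^ k) := by
  set p : ℝ⟦X⟧ := ∑ i : Fin n, C (x (i.1 + 1) / (i.1 + 1)!) * X ^ (i.1 + 1)
  have hp : trunc (n + 1) p = trunc (n + 1) f := by
    ext (_ | d)
    · simp [coeff_trunc, p, hf0]
    · rw [coeff_trunc, coeff_trunc]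
      split_ifs with hd
      · rw [hf (d + 1) (Finset.mem_Icc.mpr ⟨by omega, by omega⟩)]
        simp only [map_sum, coeff_C_mul, coeff_X_pow, Nat.add_right_cancel_iff, mul_ite, mul_one,
          mul_zero, p]
        rw [Fin.sum_univ_eq_sum_range (fun i => if d = i then x (i + 1) / (i + 1)! else 0),
          Finset.sum_ite_eq, if_pos (Finset.mem_range.mpr (by omega))]
      · rfl
  rw [← coeff_pow_eq_of_trunc_eq hp (Nat.lt_succ_self n), coeff_sum_C_mul_X_pow_pow,
    bellB_eq_sum_piAntidiag, Finset.mul_sum]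
  refine Finset.sum_congr rfl fun g hg => ?_
  rw [Finset.mem_filter, Finset.mem_piAntidiag] at hg
  rw [← hg.1.1, ← Nat.multinomial_spec Finset.univ g, ← mul_assoc]
  congr 1
  have : (∏ i, ((g i)! : ℝ)) ≠ 0 := by positivity
  have : (Nat.multinomial Finset.univ g : ℝ) ≠ 0 := by exact_mod_cast (Nat.multinomial_pos _ _).ne'
  push_cast
  field_simp

theorem centralT_zero_right {n : ℕ} (hn : n ≠ 0) : centralT n 0 = 0 := by
  simp [centralT, zero_pow hn]

theorem coeff_rescale_exp_sub_pow {𝕜 : Type*} [RCLike 𝕜] (a : 𝕜) (n j : ℕ) :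
    coeff n ((rescale a (exp 𝕜) - rescale (-a) (exp 𝕜)) ^ j) =
      j ! * (2 * a) ^ n / n ! * centralT n j := by
  rw [sub_eq_neg_add, add_pow, map_sum, centralT]
  push_cast
  rw [Finset.mul_sum, Finset.mul_sum]
  refine Finset.sum_congr rfl fun q hq => ?_
  have hqj : q ≤ j := Nat.lt_succ_iff.mp (Finset.mem_range.mp hq)
  have hterm : (-rescale (-a) (exp 𝕜)) ^ q * rescale a (exp 𝕜) ^ (j - q) * (j.choose q : 𝕜⟦X⟧) =
      C ((-1 : 𝕜) ^ q * j.choose q) * rescale (2 * a * ((j : 𝕜) / 2 - q)) (exp 𝕜) := by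
    rw [neg_pow, rescale_exp_pow_s16, rescale_exp_pow_s16, Nat.cast_sub hqj,
      show 2 * a * ((j : 𝕜) / 2 - q) = q * -a + (j - q) * a by ring, ← exp_mul_exp_eq_exp_add]
    simp only [map_mul, map_pow, map_neg, map_one, map_natCast]
    ring
  have : (j ! : 𝕜) ≠ 0 := Nat.cast_ne_zero.mpr j.factorial_ne_zero
  rw [hterm, coeff_C_mul, coeff_rescale_exp, mul_pow]
  field_simp

theorem Complex.ofReal_cos_nat_mul_pi_div_two (t : ℕ) :
    (Real.cos (t * Real.pi / 2) : ℂ) = (I ^ t + (-I) ^ t) / 2 := by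
  have hI : exp (↑(t * Real.pi / 2) * I) = I ^ t := by
    rw [show (↑(t * Real.pi / 2) : ℂ) * I = t * (Real.pi / 2 * I) by push_cast; ring,
      exp_nat_mul, exp_pi_div_two_mul_I]
  have hnegI : exp (-↑(t * Real.pi / 2) * I) = (-I) ^ t := by
    rw [show -(↑(t * Real.pi / 2) : ℂ) * I = t * (-Real.pi / 2 * I) by push_cast; ring,
      exp_nat_mul, exp_neg_pi_div_two_mul_I]
  rw [ofReal_cos, cos, hI, hnegI]

/-- The Taylor series of `sinc` at `0`: its `t`-th coefficient is `sinc⁽ᵗ⁾(0) / t!`. -/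
noncomputable def sincSeries : ℝ⟦X⟧ :=
  mk fun t => Real.cos (t * Real.pi / 2) / (t + 1)!

theorem X_mul_map_sincSeries :
    X * map Complex.ofRealHom sincSeries =
      C (2 * Complex.I)⁻¹ * (rescale Complex.I (exp ℂ) - rescale (-Complex.I) (exp ℂ)) := by
  ext (_ | t)
  · rw [coeff_zero_X_mul, coeff_C_mul, map_sub, coeff_rescale_exp, coeff_rescale_exp]
    simp
  · rw [coeff_succ_X_mul, coeff_map, sincSeries, coeff_mk, coeff_C_mul, map_sub,
      coeff_rescale_exp, coeff_rescale_exp]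
    simp only [Complex.ofRealHom_eq_coe, Complex.ofReal_div, Complex.ofReal_cos_nat_mul_pi_div_two]
    push_cast
    field_simp
    ring

theorem coeff_sincSeries_pow (m j : ℕ) :
    coeff (2 * m) (sincSeries ^ j) =
      (-4) ^ m * j ! / (2 * m + j)! * centralT (2 * m + j) j := by
  apply Complex.ofReal_injective
  have hshift : ((coeff (2 * m) (sincSeries ^ j) : ℝ) : ℂ) =
      coeff (2 * m + j) ((X * map Complex.ofRealHom sincSeries) ^ j) := by
    rw [mul_pow, coeff_X_pow_mul, ← map_pow, coeff_map]
    rfl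
  have hpow : (2 * Complex.I) ^ (2 * m + j) = (-4) ^ m * (2 * Complex.I) ^ j := by
    rw [pow_add, pow_mul, mul_pow, Complex.I_sq]
    norm_num
  have : (2 * Complex.I) ^ j ≠ 0 := by simp
  rw [hshift, X_mul_map_sincSeries, mul_pow, ← map_pow, coeff_C_mul, coeff_rescale_exp_sub_pow,
    hpow, inv_pow, RCLike.ofReal_eq_complex_ofReal]
  push_cast
  field_simp

theorem coeff_sincSeries_sub_one_pow {m : ℕ} (hm : m ≠ 0) (k : ℕ) :
    coeff (2 * m) ((sincSeries - 1) ^ k) =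
      ∑ j ∈ Finset.Icc 1 k,
        (-1) ^ (j + k) * k.choose j * ((-4) ^ m * j ! / (2 * m + j)! * centralT (2 * m + j) j) := by
  rw [coeff_sub_one_pow, Nat.range_succ_eq_Icc_zero,
    ← Finset.insert_Icc_add_one_left_eq_Icc k.zero_le, Finset.sum_insert (by simp),
    coeff_sincSeries_pow, Nat.add_zero, centralT_zero_right (by omega), mul_zero, mul_zero,
    zero_add, zero_add]
  simp_rw [coeff_sincSeries_pow]

theorem bellB_sinc_eq_coeff_pow (n k : ℕ) :
    bellB n k (fun i => (1 / ((i : ℝ) + 1)) * Real.cos (i * Real.pi / 2)) =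
      (n ! : ℝ) / k ! * coeff n ((sincSeries - 1) ^ k) := by
  refine bellB_eq_coeff_pow _ _ _ _ ?_ fun i hi => ?_
  · rw [← coeff_zero_eq_constantCoeff_apply]
    simp [sincSeries]
  · rw [map_sub, coeff_one, if_neg (by simp at hi; omega), sub_zero, sincSeries, coeff_mk,
      Nat.factorial_succ]
    push_cast
    field_simp

theorem stmt16_general (m k : ℕ) (hm : 1 ≤ m) :
    bellB (2 * m) k (fun i => (1 / ((i : ℝ) + 1)) * Real.cos (i * Real.pi / 2)) =
      (-1 : ℝ) ^ (m + k) * (2 ^ (2 * m) / (k ! : ℝ)) *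
        ∑ j ∈ Finset.Icc 1 k,
          (-1 : ℝ) ^ j * (k.choose j) * centralT (2 * m + j) j / ((2 * m + j).choose j) := by
  rw [bellB_sinc_eq_coeff_pow, coeff_sincSeries_sub_one_pow (by omega), Finset.mul_sum,
    Finset.mul_sum]
  refine Finset.sum_congr rfl fun j _ => ?_
  have hfac : (((2 * m + j).choose j * (2 * m)! * j ! : ℕ) : ℝ) = (2 * m + j)! := by
    rw [Nat.add_choose_mul_factorial_mul_factorial]
  have hfour : (-4 : ℝ) ^ m = (-1) ^ m * 2 ^ (2 * m) := by
    rw [pow_mul, ← mul_pow]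
    norm_num
  have : ((2 * m + j).choose j : ℝ) ≠ 0 := by exact_mod_cast (Nat.choose_pos (by omega)).ne'
  rw [← hfac, hfour]
  push_cast
  field_simp
  ring

theorem stmt16 (m k : ℕ) (hm : 1 ≤ m) (h1 : 1 ≤ k) (h2 : k ≤ 2 * m) :
    bellB (2 * m) k (fun i => (1 / ((i : ℝ) + 1)) * Real.cos (i * Real.pi / 2)) =
      (-1 : ℝ) ^ (m + k) * (2 ^ (2 * m) / (k ! : ℝ)) *
        ∑ j ∈ Finset.Icc 1 k,
          (-1 : ℝ) ^ j * (k.choose j) * centralT (2 * m + j) j / ((2 * m + j).choose j) :=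
  stmt16_general m k hm
end
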